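/- Let n ≥ 3 and let i, j, s be pairwise distinct indices in {1,…,n}. Then in the Steinberg group St_n(ℤ) one has [h_{ij}, h_{is}] = a, where a = h_{12}². -/

import Mathlib

/-!
The element `h_{pq}` negates every root element `x_{ab}(r)` for which exactly one of `a, b` lies
in `{p, q}`: each factor `ω_{pq}` moves such an `x_{ab}` to the root element with `p` and `q`
interchanged, with one sign change over the two steps. Hence `h_{pq}` inverts `ω_{ab}` and
`h_{ab}`, so `⁅h_{pq}, h_{ab}⁆ = h_{ab}⁻²`. Reading this commutator in both orders gives
`h_{ab}² = (h_{pq}²)⁻¹` whenever the pairs share exactly one index. Going around a triangle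
`a, b, k` of indices (three such relations, an odd number) shows that each `h_{ab}²` is an
involution, so all the `h_{ab}²` agree along such steps, and any two pairs are joined by them.
-/

open scoped commutatorElement

namespace Steinberg

/-- Generators of the Steinberg group `St_n(ℤ)`: a symbol `x_{ij}(r)` for each
pair of distinct indices `i ≠ j` in `Fin n` and each integer `r`. -/
def Gen (n : ℕ) : Type := { p : Fin n × Fin n // p.1 ≠ p.2 } × ℤ

/-- The Steinberg relations: `x_{ij}(r) x_{ij}(s) = x_{ij}(r+s)`,
`⁅x_{ij}(r), x_{jk}(s)⁆ = x_{ik}(rs)` for `i ≠ k`, and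
`⁅x_{ij}(r), x_{pq}(s)⁆ = 1` for `j ≠ p`, `i ≠ q`. -/
def rels (n : ℕ) : Set (FreeGroup (Gen n)) :=
  { w | (∃ (i j : Fin n) (h : i ≠ j) (r s : ℤ),
      w = FreeGroup.of (⟨⟨i, j⟩, h⟩, r) * FreeGroup.of (⟨⟨i, j⟩, h⟩, s) *
          (FreeGroup.of (⟨⟨i, j⟩, h⟩, r + s))⁻¹) ∨
    (∃ (i j k : Fin n) (hij : i ≠ j) (hjk : j ≠ k) (hik : i ≠ k) (r s : ℤ),
      w = ⁅FreeGroup.of ((⟨⟨i, j⟩, hij⟩ : { p : Fin n × Fin n // p.1 ≠ p.2 }), r),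
           FreeGroup.of ((⟨⟨j, k⟩, hjk⟩ : { p : Fin n × Fin n // p.1 ≠ p.2 }), s)⁆ *
          (FreeGroup.of (⟨⟨i, k⟩, hik⟩, r * s))⁻¹) ∨
    (∃ (i j p q : Fin n) (hij : i ≠ j) (hpq : p ≠ q) (r s : ℤ),
      j ≠ p ∧ i ≠ q ∧
      w = ⁅FreeGroup.of ((⟨⟨i, j⟩, hij⟩ : { p : Fin n × Fin n // p.1 ≠ p.2 }), r),
           FreeGroup.of ((⟨⟨p, q⟩, hpq⟩ : { p : Fin n × Fin n // p.1 ≠ p.2 }), s)⁆) }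

/-- The Steinberg group `St_n(ℤ)`, presented by the generators `x_{ij}(r)` and the
Steinberg relations. -/
def St (n : ℕ) : Type := PresentedGroup (rels n)

instance (n : ℕ) : Group (St n) := by unfold St; infer_instance

/-- The generator `x_{ij}(r)` of `St_n(ℤ)`. -/
def x {n : ℕ} (i j : Fin n) (h : i ≠ j) (r : ℤ) : St n :=
  PresentedGroup.of (⟨⟨i, j⟩, h⟩, r)

/-- `ω_{ij} = x_{ij}(-1) x_{ji}(1) x_{ij}(-1)`. -/
def w {n : ℕ} (i j : Fin n) (h : i ≠ j) : St n :=
  x i j h (-1) * x j i h.symm 1 * x i j h (-1)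

/-- `h_{ij} = ω_{ij} ω_{ij}`. -/
def hElt {n : ℕ} (i j : Fin n) (h : i ≠ j) : St n := w i j h * w i j h

/-- The central element `a = h_{12}²` (indices `1,2` are `⟨0,_⟩, ⟨1,_⟩ : Fin n`). -/
def aElt {n : ℕ} (hn : 3 ≤ n) : St n :=
  hElt (⟨0, by omega⟩ : Fin n) (⟨1, by omega⟩ : Fin n) (by simp [Fin.ext_iff]) ^ 2

end Steinberg

namespace Steinberg

open MulAut (conj conj_apply)

variable {n : ℕ} {i j k p q : Fin n}

theorem x_mul_x (h : i ≠ j) (r s : ℤ) : x i j h r * x i j h s = x i j h (r + s) :=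
  PresentedGroup.mk_eq_mk_of_mul_inv_mem (Or.inl ⟨i, j, h, r, s, rfl⟩)

theorem commutatorElement_x_x (hij : i ≠ j) (hjk : j ≠ k) (hik : i ≠ k) (r s : ℤ) :
    ⁅x i j hij r, x j k hjk s⁆ = x i k hik (r * s) :=
  PresentedGroup.mk_eq_mk_of_mul_inv_mem (Or.inr (Or.inl ⟨i, j, k, hij, hjk, hik, r, s, rfl⟩))

theorem commute_x_x (hij : i ≠ j) (hpq : p ≠ q) (hjp : j ≠ p) (hiq : i ≠ q) (r s : ℤ) :
    Commute (x i j hij r) (x p q hpq s) :=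
  commutatorElement_eq_one_iff_commute.mp <|
    PresentedGroup.one_of_mem (Or.inr (Or.inr ⟨i, j, p, q, hij, hpq, r, s, hjp, hiq, rfl⟩))

@[simp]
theorem x_zero (h : i ≠ j) : x i j h 0 = 1 :=
  mul_eq_left.mp (x_mul_x h 0 0)

theorem inv_x (h : i ≠ j) (r : ℤ) : (x i j h r)⁻¹ = x i j h (-r) :=
  inv_eq_of_mul_eq_one_right (by rw [x_mul_x, add_neg_cancel, x_zero])

theorem x_mul_x_assoc (h : i ≠ j) (r s : ℤ) (g : St n) :
    x i j h r * (x i j h s * g) = x i j h (r + s) * g := by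
  rw [← mul_assoc, x_mul_x]

theorem conj_x_x_of_commute (hij : i ≠ j) (hpq : p ≠ q) (hjp : j ≠ p) (hiq : i ≠ q)
    (r s : ℤ) :
    conj (x i j hij r) (x p q hpq s) = x p q hpq s :=
  (commute_x_x hij hpq hjp hiq r s).mul_inv_cancel

theorem conj_x_x_right (hij : i ≠ j) (hjk : j ≠ k) (hik : i ≠ k) (r s : ℤ) :
    conj (x i j hij r) (x j k hjk s) = x i k hik (r * s) * x j k hjk s := by
  rw [← commutatorElement_x_x hij hjk hik, commutatorElement_def, conj_apply]
  group

theorem conj_x_x_left (hij : i ≠ j) (hjk : j ≠ k) (hik : i ≠ k) (r s : ℤ) :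
    conj (x j k hjk s) (x i j hij r) = x i k hik (-(r * s)) * x i j hij r := by
  rw [← inv_x, ← commutatorElement_x_x hij hjk hik, commutatorElement_def, conj_apply]
  group

theorem commute_x_x_of_snd_eq (hik : i ≠ k) (hjk : j ≠ k) (r s : ℤ) :
    Commute (x i k hik r) (x j k hjk s) :=
  commute_x_x hik hjk hjk.symm hik r s

theorem commute_x_x_of_fst_eq (hki : k ≠ i) (hkj : k ≠ j) (r s : ℤ) :
    Commute (x k i hki r) (x k j hkj s) :=
  commute_x_x hki hkj hki.symm hkj r s

theorem conj_w (hpq : p ≠ q) (g : St n) :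
    conj (w p q hpq) g =
      conj (x p q hpq (-1)) (conj (x q p hpq.symm 1) (conj (x p q hpq (-1)) g)) := by
  simp only [w, map_mul, MulAut.mul_apply]

-- After expanding `ω_{pq}`, what is left is a word in the commuting elements `x_{pk}, x_{qk}`
-- (resp. `x_{kp}, x_{kq}`), which `simp` collects.
section
variable (hpq : p ≠ q) (hpk : p ≠ k) (hqk : q ≠ k) (r : ℤ)

theorem conj_w_x_pk : conj (w p q hpq) (x p k hpk r) = x q k hqk r := by
  rw [conj_w, conj_x_x_of_commute hpq hpk hpq.symm hpk, conj_x_x_right hpq.symm hpk hqk, map_mul,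
    conj_x_x_right hpq hqk hpk, conj_x_x_of_commute hpq hpk hpq.symm hpk]
  simp only [neg_mul, one_mul, mul_assoc, x_mul_x, (commute_x_x_of_snd_eq hpk hqk _ _).eq,
    neg_add_cancel, x_zero, mul_one]

theorem conj_w_x_qk : conj (w p q hpq) (x q k hqk r) = x p k hpk (-r) := by
  rw [conj_w, conj_x_x_right hpq hqk hpk, map_mul, conj_x_x_right hpq.symm hpk hqk,
    conj_x_x_of_commute hpq.symm hqk hpq hqk, map_mul, map_mul, conj_x_x_right hpq hqk hpk,
    conj_x_x_of_commute hpq hpk hpq.symm hpk, conj_x_x_right hpq hqk hpk]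
  simp only [mul_neg, neg_mul, one_mul, neg_neg, mul_assoc, x_mul_x, x_mul_x_assoc,
    (commute_x_x_of_snd_eq hpk hqk _ _).eq, add_neg_cancel, neg_add_cancel, x_zero, mul_one]

theorem conj_w_x_kp : conj (w p q hpq) (x k p hpk.symm r) = x k q hqk.symm r := by
  rw [conj_w, conj_x_x_left hpk.symm hpq hqk.symm, map_mul,
    conj_x_x_left hqk.symm hpq.symm hpk.symm, conj_x_x_of_commute hpq.symm hpk.symm hpk hpq.symm,
    map_mul, map_mul, conj_x_x_of_commute hpq hqk.symm hqk hpq,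
    conj_x_x_left hpk.symm hpq hqk.symm, conj_x_x_left hpk.symm hpq hqk.symm]
  simp only [mul_neg, mul_one, neg_neg, mul_assoc, x_mul_x, x_mul_x_assoc,
    (commute_x_x_of_fst_eq hpk.symm hqk.symm _ _).eq,
    (commute_x_x_of_fst_eq hpk.symm hqk.symm _ _).left_comm, neg_add_cancel, x_zero, one_mul]

theorem conj_w_x_kq : conj (w p q hpq) (x k q hqk.symm r) = x k p hpk.symm (-r) := by
  rw [conj_w, conj_x_x_of_commute hpq hqk.symm hqk hpq, conj_x_x_left hqk.symm hpq.symm hpk.symm,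
    map_mul, conj_x_x_left hpk.symm hpq hqk.symm, conj_x_x_of_commute hpq hqk.symm hqk hpq]
  simp only [mul_neg, mul_one, neg_neg, mul_assoc, x_mul_x_assoc,
    (commute_x_x_of_fst_eq hpk.symm hqk.symm _ _).eq, neg_add_cancel, x_zero, one_mul]

end

section
variable {a b : Fin n} (hpq : p ≠ q) (hab : a ≠ b)

theorem conj_hElt_x (hx : Xor (a = p ∨ a = q) (b = p ∨ b = q)) (r : ℤ) :
    conj (hElt p q hpq) (x a b hab r) = x a b hab (-r) := by
  rw [hElt, map_mul, MulAut.mul_apply]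
  rcases hx with ⟨rfl | rfl, hb⟩ | ⟨rfl | rfl, ha⟩
  · have hqb : q ≠ b := by grind
    rw [conj_w_x_pk hpq hab hqb, conj_w_x_qk hpq hab hqb]
  · have hpb : p ≠ b := by grind
    rw [conj_w_x_qk hpq hpb hab, conj_w_x_pk hpq hpb hab]
  · have hqa : q ≠ a := by grind
    rw [conj_w_x_kp hpq hab.symm hqa, conj_w_x_kq hpq hab.symm hqa]
  · have hpa : p ≠ a := by grind
    rw [conj_w_x_kq hpq hpa hab.symm, conj_w_x_kp hpq hpa hab.symm]

theorem conj_hElt_w (hx : Xor (a = p ∨ a = q) (b = p ∨ b = q)) :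
    conj (hElt p q hpq) (w a b hab) = (w a b hab)⁻¹ := by
  rw [w, map_mul, map_mul, conj_hElt_x hpq hab hx, conj_hElt_x hpq hab.symm (xor_comm _ _ ▸ hx)]
  simp only [mul_inv_rev, inv_x, neg_neg, mul_assoc]

theorem conj_hElt_hElt (hx : Xor (a = p ∨ a = q) (b = p ∨ b = q)) :
    conj (hElt p q hpq) (hElt a b hab) = (hElt a b hab)⁻¹ := by
  rw [hElt.eq_1 a b hab, map_mul, conj_hElt_w hpq hab hx, mul_inv_rev]

theorem commutatorElement_hElt_hElt (hx : Xor (a = p ∨ a = q) (b = p ∨ b = q)) :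
    ⁅hElt p q hpq, hElt a b hab⁆ = (hElt a b hab ^ 2)⁻¹ := by
  rw [commutatorElement_def, ← conj_apply, conj_hElt_hElt hpq hab hx, sq, mul_inv_rev]

theorem hElt_sq_eq_inv (hx : Xor (a = p ∨ a = q) (b = p ∨ b = q)) :
    hElt a b hab ^ 2 = (hElt p q hpq ^ 2)⁻¹ := by
  have hx' : Xor (p = a ∨ p = b) (q = a ∨ q = b) := by grind
  rw [← commutatorElement_hElt_hElt hab hpq hx', ← commutatorElement_inv,
    commutatorElement_hElt_hElt hpq hab hx, inv_inv]

end

variable {a b c d : Fin n}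

theorem inv_hElt_sq (hn : 3 ≤ n) (hab : a ≠ b) :
    (hElt a b hab ^ 2)⁻¹ = hElt a b hab ^ 2 := by
  obtain ⟨k, hka, hkb⟩ := Fin.exists_ne_and_ne_of_two_lt a b hn
  calc (hElt a b hab ^ 2)⁻¹ = hElt k b hkb ^ 2 := (hElt_sq_eq_inv hab hkb (by grind)).symm
    _ = (hElt a k hka.symm ^ 2)⁻¹ := hElt_sq_eq_inv hka.symm hkb (by grind)
    _ = hElt a b hab ^ 2 := by rw [← hElt_sq_eq_inv hka.symm hab (by grind)]

theorem hElt_sq_eq_of_xor (hn : 3 ≤ n) (hab : a ≠ b) (hcd : c ≠ d)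
    (hx : Xor (a = c ∨ a = d) (b = c ∨ b = d)) : hElt a b hab ^ 2 = hElt c d hcd ^ 2 := by
  rw [hElt_sq_eq_inv hcd hab hx, inv_hElt_sq hn]

theorem hElt_sq_eq_of_fst_eq (hn : 3 ≤ n) (hab : a ≠ b) (hac : a ≠ c) :
    hElt a b hab ^ 2 = hElt a c hac ^ 2 := by
  rcases eq_or_ne b c with rfl | hbc
  · rfl
  · exact hElt_sq_eq_of_xor hn hab hac (by grind)

theorem hElt_sq_eq_of_snd_eq (hn : 3 ≤ n) (hac : a ≠ c) (hbc : b ≠ c) :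
    hElt a c hac ^ 2 = hElt b c hbc ^ 2 := by
  rcases eq_or_ne a b with rfl | hab
  · rfl
  · exact hElt_sq_eq_of_xor hn hac hbc (by grind)

theorem hElt_sq_eq (hn : 3 ≤ n) (hab : a ≠ b) (hcd : c ≠ d) :
    hElt a b hab ^ 2 = hElt c d hcd ^ 2 := by
  rcases eq_or_ne b c with rfl | hbc
  · obtain ⟨k, hka, hkb⟩ := Fin.exists_ne_and_ne_of_two_lt a b hn
    rw [hElt_sq_eq_of_fst_eq hn hab hka.symm, hElt_sq_eq_of_snd_eq hn hka.symm hkb.symm,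
      hElt_sq_eq_of_fst_eq hn hkb.symm hcd]
  · rw [hElt_sq_eq_of_snd_eq hn hab hbc.symm, hElt_sq_eq_of_fst_eq hn hbc.symm hcd]

end Steinberg

open Steinberg in
/-- For `n ≥ 3` and pairwise distinct `i,j,s`, in `St_n(ℤ)` one has
`[h_{ij}, h_{is}] = a` where `a = h_{12}²`. -/
theorem steinberg_h_comm_eq_a (n : ℕ) (hn : 3 ≤ n) (i j s : Fin n)
    (hij : i ≠ j) (his : i ≠ s) (hjs : j ≠ s) :
    ⁅hElt i j hij, hElt i s his⁆ = aElt hn := by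
  rw [commutatorElement_hElt_hElt hij his (by grind), inv_hElt_sq hn, aElt, hElt_sq_eq hn]
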